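/- arXiv:1608.07614 — 3 statements merged into one kernel-verified Lean document; each statement's English description precedes it below -/
import Mathlib

section
/- For every n ≥ 1, the path graph P_n on vertices 1, 2, …, n (with edges exactly between i and i+1) can be represented by a 2-uniform 123-avoiding word, possibly after relabeling its vertices. -/
/-- Two letters `x` and `y` alternate in the word `w`: between any two occurrences of `x`
there is an occurrence of `y`, and between any two occurrences of `y` there is an
occurrence of `x`. -/
def Alternates {α : Type*} (w : List α) (x y : α) : Prop :=
  (∀ i j : ℕ, i < j → w[i]? = some x → w[j]? = some x →
      ∃ k : ℕ, i < k ∧ k < j ∧ w[k]? = some y) ∧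
  (∀ i j : ℕ, i < j → w[i]? = some y → w[j]? = some y →
      ∃ k : ℕ, i < k ∧ k < j ∧ w[k]? = some x)

/-- A word `w` over the vertex set of `G` represents `G`: every vertex occurs in `w`, and
two distinct vertices alternate in `w` iff they are adjacent in `G`. -/
def Represents {α : Type*} (G : SimpleGraph α) (w : List α) : Prop :=
  (∀ v : α, v ∈ w) ∧ ∀ x y : α, x ≠ y → (Alternates w x y ↔ G.Adj x y)

/-- A word `w` over the labels represents `G` via the (injective) labeling `f` of the
vertices: every letter of `w` is the label of a vertex, every vertex's label occurs in `w`,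
and the labels of two distinct vertices alternate in `w` iff the vertices are adjacent. -/
def RepresentsLab {V L : Type*} (G : SimpleGraph V) (f : V → L) (w : List L) : Prop :=
  (∀ l ∈ w, ∃ v : V, f v = l) ∧ (∀ v : V, f v ∈ w) ∧
  ∀ x y : V, x ≠ y → (Alternates w (f x) (f y) ↔ G.Adj x y)

/-- `w` avoids the pattern 123: it has no strictly increasing subsequence of length 3. -/
def Avoids123 {α : Type*} [LinearOrder α] (w : List α) : Prop :=
  ¬ ∃ (i j k : ℕ) (a b c : α), i < j ∧ j < k ∧
    w[i]? = some a ∧ w[j]? = some b ∧ w[k]? = some c ∧ a < b ∧ b < c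

/-- `w` avoids the pattern 132: there are no indices `i < j < k` with `w_i < w_k < w_j`. -/
def Avoids132 {α : Type*} [LinearOrder α] (w : List α) : Prop :=
  ¬ ∃ (i j k : ℕ) (a b c : α), i < j ∧ j < k ∧
    w[i]? = some a ∧ w[j]? = some b ∧ w[k]? = some c ∧ a < c ∧ c < b

/-- `w` is 2-uniform: every letter occurring in `w` occurs exactly twice. -/
def TwoUniform {α : Type*} (w : List α) : Prop :=
  ∀ x ∈ w, ∃ i j : ℕ, i ≠ j ∧ w[i]? = some x ∧ w[j]? = some x ∧
    ∀ k : ℕ, w[k]? = some x → k = i ∨ k = j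

/-- `s` and `τ` are order-isomorphic words: same length and entries in corresponding
positions compare the same way. -/
def OrderIsoWords {α β : Type*} [LinearOrder α] [LinearOrder β]
    (s : List α) (τ : List β) : Prop :=
  s.length = τ.length ∧
  ∀ (i j : ℕ) (a b : α) (c d : β),
    s[i]? = some a → s[j]? = some b → τ[i]? = some c → τ[j]? = some d →
    (a < b ↔ c < d)

/-- `w` contains the pattern `τ`: some subsequence of `w` is order-isomorphic to `τ`. -/
def ContainsPattern {α β : Type*} [LinearOrder α] [LinearOrder β]
    (w : List α) (τ : List β) : Prop :=
  ∃ s : List α, s.Sublist w ∧ OrderIsoWords s τ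

/-- `G` is 123-representable: after relabeling the vertices injectively by elements of some
linearly ordered set, `G` is represented by a 123-avoiding word. -/
def Rep123 {V : Type*} (G : SimpleGraph V) : Prop :=
  ∃ (L : Type) (inst : LinearOrder L) (f : V → L), Function.Injective f ∧
    ∃ w : List L, @Avoids123 L inst w ∧ RepresentsLab G f w

/-- `G` is 132-representable: after relabeling the vertices injectively by elements of some
linearly ordered set, `G` is represented by a 132-avoiding word. -/
def Rep132 {V : Type*} (G : SimpleGraph V) : Prop :=
  ∃ (L : Type) (inst : LinearOrder L) (f : V → L), Function.Injective f ∧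
    ∃ w : List L, @Avoids132 L inst w ∧ RepresentsLab G f w

/-- The path graph `P_n`: vertices `0, …, n-1` (standing for `1, …, n`), with edges exactly
between consecutive vertices `i` and `i+1`. -/
def pathG (n : ℕ) : SimpleGraph (Fin n) :=
  SimpleGraph.fromRel (fun i j => (i : ℕ) + 1 = (j : ℕ))

/-! The word `0 1 0 2 1 3 2 … (n-1) (n-2) (n-1)` has letter `a` exactly at positions `2a - 1` and
`min (2a + 2) (2n - 1)`. Two letters of a 2-uniform word alternate iff their pairs of positions
interleave, which here happens iff the letters differ by one. Every letter sits within distance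
one of half its position, so the word has no strictly decreasing subsequence of length three;
reading it in the reversed order of `ℕ` makes it 123-avoiding. -/

open OrderDual

theorem alternates_iff_of_occurrences {α : Type*} {w : List α} {x y : α} {i₁ i₂ j₁ j₂ : ℕ}
    (hx : ∀ k, w[k]? = some x ↔ k = i₁ ∨ k = i₂) (hy : ∀ k, w[k]? = some y ↔ k = j₁ ∨ k = j₂)
    (hi : i₁ < i₂) (hj : j₁ < j₂) :
    Alternates w x y ↔ (i₁ < j₁ ∧ j₁ < i₂ ∧ i₂ < j₂) ∨ (j₁ < i₁ ∧ i₁ < j₂ ∧ j₂ < i₂) := by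
  constructor
  · rintro ⟨hxy, hyx⟩
    obtain ⟨k, hik, hki, hk⟩ := hxy i₁ i₂ hi ((hx _).2 (.inl rfl)) ((hx _).2 (.inr rfl))
    obtain ⟨k', hjk', hk'j, hk'⟩ := hyx j₁ j₂ hj ((hy _).2 (.inl rfl)) ((hy _).2 (.inr rfl))
    have := (hy k).1 hk
    have := (hx k').1 hk'
    omega
  · intro hcross
    constructor
    · intro i j hij hwi hwj
      have := (hx i).1 hwi
      have := (hx j).1 hwj
      rcases hcross with h | h
      · exact ⟨j₁, by omega, by omega, (hy _).2 (.inl rfl)⟩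
      · exact ⟨j₂, by omega, by omega, (hy _).2 (.inr rfl)⟩
    · intro i j hij hwi hwj
      have := (hy i).1 hwi
      have := (hy j).1 hwj
      rcases hcross with h | h
      · exact ⟨i₂, by omega, by omega, (hx _).2 (.inr rfl)⟩
      · exact ⟨i₁, by omega, by omega, (hx _).2 (.inl rfl)⟩

/-- The letter at position `p < 2n` of `0 1 0 2 1 3 2 … (n-1) (n-2) (n-1)`; at `p = 0` the
truncated subtraction `0 / 2 - 1 = 0` gives the right letter. -/
def pathLetter (n p : ℕ) : ℕ :=
  if p = 2 * n - 1 then n - 1 else if p % 2 = 1 then (p + 1) / 2 else p / 2 - 1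

def pathWord (n : ℕ) : List ℕᵒᵈ :=
  (List.range (2 * n)).map fun p => toDual (pathLetter n p)

theorem pathWord_getElem?_eq_some_iff {n k a : ℕ} :
    (pathWord n)[k]? = some (toDual a) ↔
      a < n ∧ (k = 2 * a - 1 ∨ k = min (2 * a + 2) (2 * n - 1)) := by
  rcases lt_or_ge k (2 * n) with hk | hk
  · simp only [pathWord, List.getElem?_map, List.getElem?_range hk, Option.map_some,
      Option.some_inj, toDual_inj, pathLetter]
    split_ifs <;> omega
  · rw [List.getElem?_eq_none (by simpa [pathWord] using hk)]
    simp only [reduceCtorEq, false_iff]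
    omega

theorem pathWord_alternates_iff {n a b : ℕ} (ha : a < n) (hb : b < n) :
    Alternates (pathWord n) (toDual a) (toDual b) ↔ a + 1 = b ∨ b + 1 = a := by
  rw [alternates_iff_of_occurrences (fun _ => pathWord_getElem?_eq_some_iff.trans (and_iff_right ha))
    (fun _ => pathWord_getElem?_eq_some_iff.trans (and_iff_right hb)) (by omega) (by omega)]
  omega

theorem avoids123_pathWord (n : ℕ) : Avoids123 (pathWord n) := by
  rintro ⟨i, j, k, a, b, c, hij, hjk, hi, hj, hk, hab, hbc⟩
  rw [← toDual_ofDual a, pathWord_getElem?_eq_some_iff] at hi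
  rw [← toDual_ofDual b, pathWord_getElem?_eq_some_iff] at hj
  rw [← toDual_ofDual c, pathWord_getElem?_eq_some_iff] at hk
  have : ofDual b < ofDual a := hab
  have : ofDual c < ofDual b := hbc
  omega

theorem ofDual_lt_of_mem_pathWord {n : ℕ} {x : ℕᵒᵈ} (hx : x ∈ pathWord n) : ofDual x < n := by
  obtain ⟨k, hk⟩ := List.mem_iff_getElem?.1 hx
  rw [← toDual_ofDual x, pathWord_getElem?_eq_some_iff] at hk
  exact hk.1

theorem twoUniform_pathWord (n : ℕ) : TwoUniform (pathWord n) := by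
  intro x hx
  have ha := ofDual_lt_of_mem_pathWord hx
  rw [← toDual_ofDual x]
  refine ⟨2 * ofDual x - 1, min (2 * ofDual x + 2) (2 * n - 1), by omega, ?_, ?_, fun k hk => ?_⟩
  · exact pathWord_getElem?_eq_some_iff.2 ⟨ha, .inl rfl⟩
  · exact pathWord_getElem?_eq_some_iff.2 ⟨ha, .inr rfl⟩
  · exact (pathWord_getElem?_eq_some_iff.1 hk).2

theorem pathG_adj_iff {n : ℕ} {x y : Fin n} :
    (pathG n).Adj x y ↔ x ≠ y ∧ ((x : ℕ) + 1 = y ∨ (y : ℕ) + 1 = x) :=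
  SimpleGraph.fromRel_adj _ x y

theorem representsLab_pathWord (n : ℕ) :
    RepresentsLab (pathG n) (fun v : Fin n => toDual (v : ℕ)) (pathWord n) := by
  refine ⟨fun l hl => ⟨⟨ofDual l, ofDual_lt_of_mem_pathWord hl⟩, rfl⟩, fun v => ?_,
    fun x y hxy => ?_⟩
  · exact List.mem_of_getElem? (pathWord_getElem?_eq_some_iff.2 ⟨v.isLt, .inl rfl⟩)
  · rw [pathWord_alternates_iff x.isLt y.isLt, pathG_adj_iff]
    exact (and_iff_right hxy).symm

theorem stmt_11_general (n : ℕ) :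
    ∃ (L : Type) (inst : LinearOrder L) (f : Fin n → L), Function.Injective f ∧
      ∃ w : List L, @Avoids123 L inst w ∧ TwoUniform w ∧ RepresentsLab (pathG n) f w :=
  ⟨ℕᵒᵈ, inferInstance, fun v => toDual (v : ℕ), fun _ _ h => Fin.val_injective (toDual_inj.1 h),
    pathWord n, avoids123_pathWord n, twoUniform_pathWord n, representsLab_pathWord n⟩

/-- for every `n ≥ 1`, the path graph `P_n` can be represented by a 2-uniform
123-avoiding word, possibly after relabeling its vertices by elements of a linearly ordered
set. -/
theorem stmt_11 (n : ℕ) (hn : 1 ≤ n) :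
    ∃ (L : Type) (inst : LinearOrder L) (f : Fin n → L), Function.Injective f ∧
      ∃ w : List L, @Avoids123 L inst w ∧ TwoUniform w ∧ RepresentsLab (pathG n) f w :=
  stmt_11_general n
end

section
/- Every finite tree can be represented by a 2-uniform 132-avoiding word, possibly after relabeling its vertices by elements of a linearly ordered set. -/
/-!
Induction on the number of vertices. A single vertex labelled `a` is represented by `a a`.
Otherwise remove a leaf `x` with neighbour `y` and represent the rest by a word `A ++ c :: B`,
where `c` is the label of `y` and does not occur in `A`. Label `x` by a new letter `u` just above
`c`, i.e. no letter of the word lies in `(c, u]` (possible in `ℚ`). The word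
`A ++ u :: c :: u :: B` is still 2-uniform, `u` alternates with `c` only, and all other pairs
alternate exactly as before. It stays 132-avoiding as long as every letter, at its first
occurrence, is smaller than all letters before it (`FirstOccDecreasing`): this forces every
letter of `A` above `u`, and the invariant itself survives the insertion.
-/

open SimpleGraph

theorem alternates_comm {α : Type*} {w : List α} {x z : α} :
    Alternates w x z ↔ Alternates w z x :=
  and_comm

theorem TwoUniform.eq_or_eq {α : Type*} {w : List α} (hw : TwoUniform w) {x : α} {i j k : ℕ}
    (hij : i ≠ j) (hi : w[i]? = some x) (hj : w[j]? = some x) (hk : w[k]? = some x) :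
    k = i ∨ k = j := by
  obtain ⟨i₀, j₀, -, -, -, hocc⟩ := hw x (List.mem_of_getElem? hi)
  have := hocc i hi
  have := hocc j hj
  have := hocc k hk
  omega

theorem SimpleGraph.IsTree.exists_leaf {V : Type*} [Finite V] [Nontrivial V] {G : SimpleGraph V}
    (hG : G.IsTree) : ∃ x y, G.Adj x y ∧ ∀ z, G.Adj x z → z = y := by
  classical
  have := Fintype.ofFinite V
  obtain ⟨x, hx⟩ := hG.exists_vert_degree_one_of_nontrivial
  obtain ⟨y, hxy, hy⟩ := degree_eq_one_iff_existsUnique_adj.1 hx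
  exact ⟨x, y, hxy, hy⟩

theorem SimpleGraph.IsTree.induce_compl_singleton {V : Type*} {G : SimpleGraph V} (hG : G.IsTree)
    {x y : V} (hxy : G.Adj x y) (hleaf : ∀ z, G.Adj x z → z = y) :
    (G.induce {x}ᶜ).IsTree := by
  refine ⟨?_, hG.isAcyclic.induce _⟩
  have : Nonempty ({x}ᶜ : Set V) := ⟨⟨y, hxy.ne'⟩⟩
  refine ⟨hG.connected.preconnected.induce_of_degree_eq_one (s := {x}ᶜ) fun v hv => ?_⟩
  obtain rfl : v = x := by simpa using hv
  exact fun a ha b hb => (hleaf a ha).trans (hleaf b hb).symm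

theorem eq_or_exists_coe_compl_singleton {V : Type*} (x v : V) :
    x = v ∨ ∃ v' : ({x}ᶜ : Set V), (v' : V) = v := by
  by_cases h : v = x
  · exact Or.inl h.symm
  · exact Or.inr ⟨⟨v, h⟩, rfl⟩

namespace TreeWord

variable {α : Type*}

def SeparatedBy (w : List α) (x z : α) : Prop :=
  ∀ i j : ℕ, i < j → w[i]? = some x → w[j]? = some x →
    ∃ k : ℕ, i < k ∧ k < j ∧ w[k]? = some z

def FirstOccDecreasing [LinearOrder α] (w : List α) : Prop :=
  ∀ (i j : ℕ) (a b : α), i < j → w[i]? = some a → w[j]? = some b →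
    (∀ k < j, w[k]? ≠ some b) → b < a

/-- Where position `i` of `A ++ c :: B` lands in `A ++ u :: c :: u :: B`, for `n = A.length`. -/
def embedIdx (n : ℕ) : ℕ ↪o ℕ :=
  OrderEmbedding.ofStrictMono (fun i => if i < n then i else if i = n then n + 1 else i + 2)
    (fun i j h => by dsimp only; split_ifs <;> omega)

theorem embedIdx_apply (n i : ℕ) :
    embedIdx n i = if i < n then i else if i = n then n + 1 else i + 2 :=
  rfl

theorem exists_embedIdx_eq {n j : ℕ} (h : j ≠ n) (h₂ : j ≠ n + 2) :
    ∃ i, embedIdx n i = j := by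
  simp only [embedIdx_apply]
  rcases lt_or_gt_of_ne h with hj | hj
  · exact ⟨j, if_pos hj⟩
  · by_cases hj₁ : j = n + 1
    · exact ⟨n, by simp [hj₁]⟩
    · exact ⟨j - 2, by split_ifs <;> omega⟩

section Insertion

variable {A B : List α} {u c : α}

local notation "old" => A ++ c :: B
local notation "new" => A ++ u :: c :: u :: B

theorem getElem?_new_embedIdx (i : ℕ) : (new)[embedIdx A.length i]? = (old)[i]? := by
  rw [embedIdx_apply]
  split_ifs with h₁ h₂
  · rw [List.getElem?_append_left h₁, List.getElem?_append_left h₁]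
  · subst h₂; simp
  · obtain ⟨k, rfl⟩ : ∃ k, i = A.length + 1 + k := ⟨i - A.length - 1, by omega⟩
    rw [List.getElem?_append_right (by omega), List.getElem?_append_right (by omega)]
    simp [show A.length + 1 + k + 2 - A.length = k + 3 by omega,
      show A.length + 1 + k - A.length = k + 1 by omega]

theorem getElem?_new_length : (new)[A.length]? = some u := by simp

theorem getElem?_new_length_add_one : (new)[A.length + 1]? = some c := by simp

theorem getElem?_new_length_add_two : (new)[A.length + 2]? = some u := by
  rw [List.getElem?_append_right (by omega)]; simp

theorem exists_embedIdx_of_getElem?_new {j : ℕ} {x : α} (h : (new)[j]? = some x) (hx : x ≠ u) :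
    ∃ i, embedIdx A.length i = j ∧ (old)[i]? = some x := by
  have hj : j ≠ A.length := by rintro rfl; simp at h; exact hx h.symm
  have hj₂ : j ≠ A.length + 2 := by
    rintro rfl; rw [getElem?_new_length_add_two] at h; exact hx (Option.some_injective _ h).symm
  obtain ⟨i, rfl⟩ := exists_embedIdx_eq hj hj₂
  exact ⟨i, rfl, by rwa [← getElem?_new_embedIdx]⟩

theorem mem_new {x : α} : x ∈ new ↔ x ∈ old ∨ x = u := by
  simp only [List.mem_append, List.mem_cons]
  tauto

theorem eq_of_getElem?_new_eq_u (hu : u ∉ old) {j : ℕ} (h : (new)[j]? = some u) :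
    j = A.length ∨ j = A.length + 2 := by
  by_contra! hj
  obtain ⟨i, rfl⟩ := exists_embedIdx_eq hj.1 hj.2
  rw [getElem?_new_embedIdx] at h
  exact hu (List.mem_of_getElem? h)

theorem separatedBy_new_iff {x z : α} (hx : x ≠ u) (hz : z ≠ u) :
    SeparatedBy new x z ↔ SeparatedBy old x z := by
  set e := embedIdx A.length
  constructor
  · intro h i j hij hi hj
    rw [← getElem?_new_embedIdx] at hi hj
    obtain ⟨k, hik, hkj, hk⟩ := h (e i) (e j) (e.lt_iff_lt.2 hij) hi hj
    obtain ⟨m, rfl, hm⟩ := exists_embedIdx_of_getElem?_new hk hz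
    exact ⟨m, e.lt_iff_lt.1 hik, e.lt_iff_lt.1 hkj, hm⟩
  · intro h i j hij hi hj
    obtain ⟨i, rfl, hi'⟩ := exists_embedIdx_of_getElem?_new hi hx
    obtain ⟨j, rfl, hj'⟩ := exists_embedIdx_of_getElem?_new hj hx
    obtain ⟨k, hik, hkj, hk⟩ := h i j (e.lt_iff_lt.1 hij) hi' hj'
    exact ⟨e k, e.lt_iff_lt.2 hik, e.lt_iff_lt.2 hkj, by rwa [getElem?_new_embedIdx]⟩

theorem alternates_new_iff {x z : α} (hx : x ≠ u) (hz : z ≠ u) :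
    Alternates new x z ↔ Alternates old x z :=
  and_congr (separatedBy_new_iff hx hz) (separatedBy_new_iff hz hx)

theorem twoUniform_new (hu : u ∉ old) (h : TwoUniform old) : TwoUniform new := by
  intro x hx
  rcases eq_or_ne x u with rfl | hxu
  · exact ⟨A.length, A.length + 2, by omega, getElem?_new_length, getElem?_new_length_add_two,
      fun k hk => eq_of_getElem?_new_eq_u hu hk⟩
  obtain ⟨i, j, hij, hi, hj, hocc⟩ := h x ((mem_new.1 hx).resolve_right hxu)
  set e := embedIdx A.length
  refine ⟨e i, e j, e.injective.ne hij, by rwa [getElem?_new_embedIdx],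
    by rwa [getElem?_new_embedIdx], fun k hk => ?_⟩
  obtain ⟨k, rfl, hk'⟩ := exists_embedIdx_of_getElem?_new hk hxu
  exact (hocc k hk').imp (congrArg e) (congrArg e)

theorem mem_or_eq_of_getElem?_new {i : ℕ} {a : α} (h : (new)[i]? = some a)
    (hi : i ≤ A.length + 1) : a ∈ A ∨ a = u ∨ a = c := by
  rcases hi.lt_or_eq with hi | rfl
  · rcases (Nat.lt_succ_iff.1 hi).lt_or_eq with hi | rfl
    · rw [List.getElem?_append_left hi] at h
      exact Or.inl (List.mem_of_getElem? h)
    · simp at h; exact Or.inr (Or.inl h.symm)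
  · rw [getElem?_new_length_add_one] at h
    exact Or.inr (Or.inr (Option.some_injective _ h).symm)

theorem getElem?_old_ne_of_lt (hcA : c ∉ A) {k : ℕ} (hk : k < A.length) :
    (old)[k]? ≠ some c := by
  rw [List.getElem?_append_left hk]
  exact fun h => hcA (List.mem_of_getElem? h)

theorem length_lt_of_getElem?_new_eq_c (hcA : c ∉ A) (hcu : c ≠ u) {j : ℕ}
    (h : (new)[j]? = some c) : A.length < j := by
  by_contra! hj
  rcases hj.lt_or_eq with hj | rfl
  · rw [List.getElem?_append_left hj] at h
    exact hcA (List.mem_of_getElem? h)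
  · simp at h
    exact hcu h.symm

theorem alternates_new_u_c (hu : u ∉ old) (hcA : c ∉ A) (h : TwoUniform old) :
    Alternates new u c := by
  have hcu : c ≠ u := by rintro rfl; simp at hu
  constructor
  · intro i j hij hi hj
    have := eq_of_getElem?_new_eq_u hu hi
    have := eq_of_getElem?_new_eq_u hu hj
    exact ⟨A.length + 1, by omega, by omega, getElem?_new_length_add_one⟩
  · intro i j hij hi hj
    have hi' := length_lt_of_getElem?_new_eq_c hcA hcu hi
    have hj' : j ≠ A.length + 2 := by rintro rfl; simp_all
    have := (twoUniform_new hu h).eq_or_eq hij.ne hi hj getElem?_new_length_add_one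
    exact ⟨A.length + 2, by omega, by omega, getElem?_new_length_add_two⟩

theorem eq_c_of_alternates_new_u {z : α} (h : Alternates new u z) : z = c := by
  obtain ⟨k, hk₁, hk₂, hk⟩ :=
    h.1 A.length (A.length + 2) (by omega) getElem?_new_length getElem?_new_length_add_two
  obtain rfl : k = A.length + 1 := by omega
  rw [getElem?_new_length_add_one] at hk
  exact (Option.some_injective _ hk).symm

end Insertion

section InsertionOrder

variable [LinearOrder α] {A B : List α} {u c : α}

local notation "old" => A ++ c :: B
local notation "new" => A ++ u :: c :: u :: B

theorem notMem_of_gap (hcu : c < u) (hgap : ∀ m ∈ old, m ≤ c ∨ u < m) : u ∉ old :=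
  fun hu => (hgap u hu).elim hcu.not_ge (lt_irrefl u)

theorem lt_of_mem_prefix (hFD : FirstOccDecreasing old) (hcA : c ∉ A)
    (hgap : ∀ m ∈ old, m ≤ c ∨ u < m) {a : α} (ha : a ∈ A) : u < a := by
  obtain ⟨i, hi, rfl⟩ := List.getElem_of_mem ha
  have hca : c < A[i] := hFD i A.length _ c hi (by simp [List.getElem?_append_left hi])
    (by simp) fun k hk => getElem?_old_ne_of_lt hcA hk
  exact (hgap _ (by simp [ha])).resolve_left hca.not_ge

theorem firstOccDecreasing_new (hFD : FirstOccDecreasing old) (hcA : c ∉ A) (hcu : c < u)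
    (hgap : ∀ m ∈ old, m ≤ c ∨ u < m) : FirstOccDecreasing new := by
  have hu := notMem_of_gap hcu hgap
  set e := embedIdx A.length
  intro i j a b hij hi hj hfirst
  rcases eq_or_ne b u with rfl | hbu
  · obtain rfl : j = A.length := (eq_of_getElem?_new_eq_u hu hj).resolve_right
      fun hj₂ => hfirst A.length (by omega) getElem?_new_length
    rw [List.getElem?_append_left hij] at hi
    exact lt_of_mem_prefix hFD hcA hgap (List.mem_of_getElem? hi)
  obtain ⟨j, rfl, hj'⟩ := exists_embedIdx_of_getElem?_new hj hbu
  have hfirst' : ∀ k < j, (old)[k]? ≠ some b := fun k hk hk' =>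
    hfirst (e k) (e.lt_iff_lt.2 hk) (by rwa [getElem?_new_embedIdx])
  rcases eq_or_ne a u with rfl | hau
  · have hpj : A.length ≤ j := by
      have := eq_of_getElem?_new_eq_u hu hi
      have : i < e j := hij
      rw [embedIdx_apply] at this
      split_ifs at this <;> omega
    rcases hpj.lt_or_eq with hpj | rfl
    · exact (hFD _ _ c b hpj (by simp) hj' hfirst').trans hcu
    · simp only [List.getElem?_append_right le_rfl, Nat.sub_self, List.getElem?_cons_zero,
        Option.some_inj] at hj'
      exact hj' ▸ hcu
  · obtain ⟨i, rfl, hi'⟩ := exists_embedIdx_of_getElem?_new hi hau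
    exact hFD i j a b (e.lt_iff_lt.1 hij) hi' hj' hfirst'

theorem avoids132_new (hAv : Avoids132 old) (hFD : FirstOccDecreasing old) (hcA : c ∉ A)
    (hcu : c < u) (hgap : ∀ m ∈ old, m ≤ c ∨ u < m) : Avoids132 new := by
  have hu := notMem_of_gap hcu hgap
  have hAu : ∀ a ∈ A, u < a := fun a => lt_of_mem_prefix hFD hcA hgap
  set e := embedIdx A.length
  rintro ⟨i, j, k, a, b, d, hij, hjk, hi, hj, hk, had, hdb⟩
  by_cases hau : a = u
  · -- then `c`, `b`, `d` form a 132 pattern in the old word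
    subst hau
    have hi' := eq_of_getElem?_new_eq_u hu hi
    obtain ⟨j, rfl, hj'⟩ := exists_embedIdx_of_getElem?_new hj (had.trans hdb).ne'
    obtain ⟨k, rfl, hk'⟩ := exists_embedIdx_of_getElem?_new hk had.ne'
    have hpj : A.length < j := by
      have : i < e j := hij
      rw [embedIdx_apply] at this
      split_ifs at this with h₁ h₂
      · omega
      · subst h₂; simp at hj'; exact absurd (hj' ▸ had.trans hdb) hcu.not_gt
      · omega
    exact hAv ⟨A.length, j, k, c, b, d, hpj, e.lt_iff_lt.1 hjk, by simp, hj', hk',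
      hcu.trans had, hdb⟩
  by_cases hbu : b = u
  · subst hbu
    have hdc : d ≤ c := by
      obtain ⟨k, rfl, hk'⟩ := exists_embedIdx_of_getElem?_new hk hdb.ne
      exact (hgap d (List.mem_of_getElem? hk')).resolve_right hdb.not_gt
    have := eq_of_getElem?_new_eq_u hu hj
    rcases mem_or_eq_of_getElem?_new hi (by omega) with ha | rfl | rfl
    · exact (hAu a ha).not_gt (had.trans hdb)
    · exact hau rfl
    · exact had.not_ge hdc
  by_cases hdu : d = u
  · subst hdu
    have := eq_of_getElem?_new_eq_u hu hk
    rcases mem_or_eq_of_getElem?_new hi (by omega) with ha | rfl | rfl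
    · exact (hAu a ha).not_gt had
    · exact hau rfl
    · have := length_lt_of_getElem?_new_eq_c hcA had.ne hi
      omega
  obtain ⟨i, rfl, hi'⟩ := exists_embedIdx_of_getElem?_new hi hau
  obtain ⟨j, rfl, hj'⟩ := exists_embedIdx_of_getElem?_new hj hbu
  obtain ⟨k, rfl, hk'⟩ := exists_embedIdx_of_getElem?_new hk hdu
  exact hAv ⟨i, j, k, a, b, d, e.lt_iff_lt.1 hij, e.lt_iff_lt.1 hjk, hi', hj', hk', had, hdb⟩

end InsertionOrder

theorem exists_gap_above [LinearOrder α] [DenselyOrdered α] [NoMaxOrder α] (w : List α)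
    (c : α) :
    ∃ u, c < u ∧ ∀ m ∈ w, m ≤ c ∨ u < m := by
  induction w with
  | nil =>
    obtain ⟨u, hu⟩ := exists_gt c
    exact ⟨u, hu, by simp⟩
  | cons a w ih =>
    obtain ⟨u, hcu, hu⟩ := ih
    rcases le_or_gt a c with hac | hca
    · exact ⟨u, hcu, List.forall_mem_cons.2 ⟨Or.inl hac, hu⟩⟩
    · obtain ⟨v, hcv, hv⟩ := exists_between (lt_min hcu hca)
      refine ⟨v, hcv, List.forall_mem_cons.2 ⟨Or.inr (hv.trans_le (min_le_right _ _)), ?_⟩⟩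
      exact fun m hm => (hu m hm).imp_right (hv.trans_le (min_le_left _ _)).trans

theorem exists_word_add_pendant [LinearOrder α] [DenselyOrdered α] [NoMaxOrder α] {w : List α}
    {c : α} (hc : c ∈ w) (hAv : Avoids132 w) (hTU : TwoUniform w) (hFD : FirstOccDecreasing w) :
    ∃ u ∉ w, ∃ w' : List α, Avoids132 w' ∧ TwoUniform w' ∧ FirstOccDecreasing w' ∧
      (∀ x, x ∈ w' ↔ x ∈ w ∨ x = u) ∧
      (∀ x z, x ≠ u → z ≠ u → (Alternates w' x z ↔ Alternates w x z)) ∧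
      ∀ z, Alternates w' u z ↔ z = c := by
  obtain ⟨A, B, rfl, hcA⟩ := List.eq_append_cons_of_mem hc
  obtain ⟨u, hcu, hgap⟩ := exists_gap_above (A ++ c :: B) c
  have hu := notMem_of_gap hcu hgap
  refine ⟨u, hu, A ++ u :: c :: u :: B, avoids132_new hAv hFD hcA hcu hgap,
    twoUniform_new hu hTU, firstOccDecreasing_new hFD hcA hcu hgap, fun x => mem_new,
    fun x z => alternates_new_iff, fun z => ⟨eq_c_of_alternates_new_u, ?_⟩⟩
  rintro rfl
  exact alternates_new_u_c hu hcA hTU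

section Representation

variable [LinearOrder α] {V : Type*}

variable (α) in
def HasRep (G : SimpleGraph V) : Prop :=
  ∃ f : V → α, Function.Injective f ∧ ∃ w : List α, Avoids132 w ∧ TwoUniform w ∧
    FirstOccDecreasing w ∧ RepresentsLab G f w

theorem hasRep_of_subsingleton [Nonempty α] [Nonempty V] [Subsingleton V] (G : SimpleGraph V) :
    HasRep α G := by
  obtain ⟨a⟩ := ‹Nonempty α›
  obtain ⟨v⟩ := ‹Nonempty V›
  have hw : ∀ {k : ℕ} {b : α}, [a, a][k]? = some b → b = a ∧ k < 2 := fun h =>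
    ⟨by simpa using List.mem_of_getElem? h, by simpa using (List.getElem?_eq_some_iff.1 h).1⟩
  refine ⟨fun _ => a, Function.injective_of_subsingleton _, [a, a], ?_, ?_, ?_, ?_, by simp, ?_⟩
  · rintro ⟨i, j, k, b, d, e, -, -, hi, -, hk, hbe, -⟩
    exact hbe.ne ((hw hi).1.trans (hw hk).1.symm)
  · intro b hb
    obtain rfl : b = a := by simpa using hb
    exact ⟨0, 1, by omega, rfl, rfl, fun k hk => by have := (hw hk).2; omega⟩
  · intro i j b d hij hi hj hfirst
    obtain ⟨rfl, -⟩ := hw hj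
    exact absurd rfl (hfirst 0 (by omega))
  · intro l hl
    exact ⟨v, (by simpa using hl : l = a).symm⟩
  · intro x y hxy
    exact absurd (Subsingleton.elim x y) hxy

theorem HasRep.of_induce_compl_leaf [DenselyOrdered α] [NoMaxOrder α] {G : SimpleGraph V}
    {x y : V} (hxy : G.Adj x y) (hleaf : ∀ z, G.Adj x z → z = y)
    (h : HasRep α (G.induce {x}ᶜ)) : HasRep α G := by
  classical
  obtain ⟨f, hf, w, hAv, hTU, hFD, hlab, hmem, halt⟩ := h
  obtain ⟨u, hu, w', hAv', hTU', hFD', hmem', halt', haltu⟩ :=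
    exists_word_add_pendant (hmem ⟨y, hxy.ne'⟩) hAv hTU hFD
  have hfu : ∀ v, f v ≠ u := fun v h => hu (h ▸ hmem v)
  let g : V → α := fun v => if h : v = x then u else f ⟨v, h⟩
  have hgx : g x = u := dif_pos rfl
  have hg : ∀ v : ({x}ᶜ : Set V), g v = f v := fun v => dif_neg v.2
  have haltx : ∀ v : ({x}ᶜ : Set V), Alternates w' u (f v) ↔ G.Adj x v := fun v => by
    rw [haltu, hf.eq_iff]
    exact ⟨fun h => h ▸ hxy, fun h => Subtype.ext (hleaf _ h)⟩
  refine ⟨g, fun a b hab => ?_, w', hAv', hTU', hFD', fun l hl => ?_, fun v => ?_,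
    fun a b hab => ?_⟩
  · rcases eq_or_exists_coe_compl_singleton x a with rfl | ⟨a, rfl⟩ <;>
      rcases eq_or_exists_coe_compl_singleton x b with rfl | ⟨b, rfl⟩
    · rfl
    · exact absurd (hgx ▸ hg b ▸ hab).symm (hfu b)
    · exact absurd (hgx ▸ hg a ▸ hab) (hfu a)
    · rw [hg, hg] at hab
      exact congrArg Subtype.val (hf hab)
  · rcases (hmem' l).1 hl with hl | rfl
    · obtain ⟨v, rfl⟩ := hlab l hl
      exact ⟨v, hg v⟩
    · exact ⟨x, hgx⟩
  · rcases eq_or_exists_coe_compl_singleton x v with rfl | ⟨v, rfl⟩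
    · exact hgx ▸ (hmem' u).2 (Or.inr rfl)
    · exact hg v ▸ (hmem' _).2 (Or.inl (hmem v))
  · rcases eq_or_exists_coe_compl_singleton x a with rfl | ⟨a, rfl⟩ <;>
      rcases eq_or_exists_coe_compl_singleton x b with rfl | ⟨b, rfl⟩
    · exact absurd rfl hab
    · rw [hgx, hg, haltx]
    · rw [hgx, hg, alternates_comm, haltx, G.adj_comm]
    · rw [hg, hg, halt' _ _ (hfu a) (hfu b), halt a b (Subtype.coe_injective.ne_iff.1 hab),
        induce_adj]

theorem hasRep_of_isTree [DenselyOrdered α] [NoMaxOrder α] [Nonempty α] [Finite V]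
    {G : SimpleGraph V} (hG : G.IsTree) : HasRep α G := by
  induction V using Finite.induction_subsingleton_or_nontrivial with
  | hbase V =>
    have := hG.connected.nonempty
    exact hasRep_of_subsingleton G
  | hstep V ih =>
    obtain ⟨x, y, hxy, hleaf⟩ := hG.exists_leaf
    exact .of_induce_compl_leaf hxy hleaf <| ih _ (Finite.card_subtype_lt (not_not.2 rfl))
      (hG.induce_compl_singleton hxy hleaf)

end Representation

end TreeWord

/-- every finite tree can be represented by a 2-uniform 132-avoiding word,
possibly after relabeling its vertices by elements of a linearly ordered set. -/
theorem stmt_13 {V : Type*} [Fintype V] (G : SimpleGraph V) (hG : G.IsTree) :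
    ∃ (L : Type) (inst : LinearOrder L) (f : V → L), Function.Injective f ∧
      ∃ w : List L, @Avoids132 L inst w ∧ TwoUniform w ∧ RepresentsLab G f w := by
  obtain ⟨f, hf, w, hAv, hTU, -, hrep⟩ := TreeWord.hasRep_of_isTree (α := ℚ) hG
  exact ⟨ℚ, inferInstance, f, hf, w, hAv, hTU, hrep⟩
end

section
/- The disjoint union of two complete graphs K_4 (the graph on 8 vertices consisting of two vertex-disjoint 4-cliques with no edges between them) is not 132-representable: for every injective labeling of its vertices by elements of a linearly ordered set, no 132-avoiding word represents it. -/
/-- The disjoint union of two complete graphs `K_4`: two vertex-disjoint 4-cliques with no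
edges between them. -/
def twoK4 : SimpleGraph (Fin 4 ⊕ Fin 4) :=
  (⊤ : SimpleGraph (Fin 4)) ⊕g (⊤ : SimpleGraph (Fin 4))


/-!
In a 132-avoiding word, no four pairwise alternating letters can all occur twice. Take
letters `a < c < b < M` that do, and look at their first two occurrences. Since `M`
alternates with `b`, the first `M` comes before the second `b`; so if the first `a` or the
first `c` precedes the first `M`, that letter, `M` and the second `b` form a 132. Otherwise
`M` starts before both `a` and `c`, and alternation places the second `M` between the first
`a` and the second `c`, which again gives a 132 (`a`, `M`, `c`).

Hence each of the two copies of `K_4` has a vertex whose label occurs at most once. Two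
such labels alternate vacuously, so the word would make these vertices of different copies
adjacent.
-/

def OccursTwice {α : Type*} (w : List α) (x : α) : Prop :=
  ∃ i j : ℕ, i < j ∧ w[i]? = some x ∧ w[j]? = some x

structure FirstTwoOccurrences {α : Type*} (w : List α) (x : α) (i j : ℕ) : Prop where
  lt : i < j
  first : w[i]? = some x
  second : w[j]? = some x
  first_le : ∀ k, w[k]? = some x → i ≤ k
  second_le : ∀ k, w[k]? = some x → i < k → j ≤ k

section Occurrences

variable {α : Type*} {w : List α} {x y : α}

theorem OccursTwice.exists_firstTwoOccurrences (h : OccursTwice w x) :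
    ∃ i j, FirstTwoOccurrences w x i j := by
  classical
  obtain ⟨i, j, hij, hi, hj⟩ := h
  have hfirst : ∃ n, w[n]? = some x := ⟨i, hi⟩
  have hsecond : ∃ n, Nat.find hfirst < n ∧ w[n]? = some x :=
    ⟨j, (Nat.find_le hi).trans_lt hij, hj⟩
  exact ⟨_, _, (Nat.find_spec hsecond).1, Nat.find_spec hfirst, (Nat.find_spec hsecond).2,
    fun _ hk => Nat.find_le hk, fun _ hk hlt => Nat.find_le ⟨hlt, hk⟩⟩

theorem FirstTwoOccurrences.first_ne {i j k l : ℕ} (hx : FirstTwoOccurrences w x i j)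
    (hy : FirstTwoOccurrences w y k l) (hxy : x ≠ y) : i ≠ k := by
  rintro rfl
  exact hxy (Option.some.inj (hx.first.symm.trans hy.first))

theorem Alternates.symm (h : Alternates w x y) : Alternates w y x := ⟨h.2, h.1⟩

theorem Alternates.interleave {i j k l : ℕ} (h : Alternates w x y)
    (hx : FirstTwoOccurrences w x i j) (hy : FirstTwoOccurrences w y k l) (hik : i < k) :
    k < j ∧ j < l := by
  obtain ⟨m, -, hmj, hm⟩ := h.1 i j hx.lt hx.first hx.second
  obtain ⟨n, hkn, hnl, hn⟩ := h.2 k l hy.lt hy.first hy.second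
  exact ⟨(hy.first_le m hm).trans_lt hmj, (hx.second_le n hn (hik.trans hkn)).trans_lt hnl⟩

theorem alternates_of_not_occursTwice (hx : ¬ OccursTwice w x) (hy : ¬ OccursTwice w y) :
    Alternates w x y :=
  ⟨fun i j hij hi hj => (hx ⟨i, j, hij, hi, hj⟩).elim,
    fun i j hij hi hj => (hy ⟨i, j, hij, hi, hj⟩).elim⟩

end Occurrences

section Avoidance

variable {L : Type*} [LinearOrder L] {w : List L}

theorem not_avoids132_of_alternates_max {a c b M : L} (hac : a < c) (hcb : c < b)
    (hbM : b < M) (ha : OccursTwice w a) (hc : OccursTwice w c) (hb : OccursTwice w b)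
    (hM : OccursTwice w M) (alt_aM : Alternates w a M) (alt_cM : Alternates w c M)
    (alt_bM : Alternates w b M) : ¬ Avoids132 w := by
  obtain ⟨fa, sa, ha⟩ := ha.exists_firstTwoOccurrences
  obtain ⟨fc, sc, hc⟩ := hc.exists_firstTwoOccurrences
  obtain ⟨fb, sb, hb⟩ := hb.exists_firstTwoOccurrences
  obtain ⟨fM, sM, hM⟩ := hM.exists_firstTwoOccurrences
  have hfM_sb : fM < sb := by
    rcases (hb.first_ne hM hbM.ne).lt_or_gt with h | h
    · exact (alt_bM.interleave hb hM h).1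
    · exact h.trans hb.lt
  intro hav
  apply hav
  rcases (ha.first_ne hM (hac.trans (hcb.trans hbM)).ne).lt_or_gt with hfa | hfa
  · exact ⟨fa, fM, sb, a, M, b, hfa, hfM_sb, ha.first, hM.first, hb.second,
      hac.trans hcb, hbM⟩
  rcases (hc.first_ne hM (hcb.trans hbM).ne).lt_or_gt with hfc | hfc
  · exact ⟨fc, fM, sb, c, M, b, hfc, hfM_sb, hc.first, hM.first, hb.second, hcb, hbM⟩
  exact ⟨fa, sM, sc, a, M, c, (alt_aM.symm.interleave hM ha hfa).1,
    (alt_cM.symm.interleave hM hc hfc).2, ha.first, hM.second, hc.second, hac,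
    hcb.trans hbM⟩

theorem Avoids132.exists_not_occursTwice (hav : Avoids132 w) {T : Finset L}
    (hT : 4 ≤ T.card) (halt : ∀ x ∈ T, ∀ y ∈ T, x ≠ y → Alternates w x y) :
    ∃ x ∈ T, ¬ OccursTwice w x := by
  by_contra! htwice
  obtain ⟨S, hST, hS⟩ := Finset.exists_subset_card_eq hT
  let e := S.orderEmbOfFin hS
  have hmem (i : Fin 4) : e i ∈ T := hST (S.orderEmbOfFin_mem hS i)
  have hlt {i j : Fin 4} (hij : i < j) : e i < e j := e.strictMono hij
  have halt_max (i : Fin 4) (hi : i < 3) : Alternates w (e i) (e 3) :=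
    halt _ (hmem i) _ (hmem 3) (hlt hi).ne
  exact not_avoids132_of_alternates_max (hlt (by decide : (0 : Fin 4) < 1))
    (hlt (by decide : (1 : Fin 4) < 2)) (hlt (by decide : (2 : Fin 4) < 3))
    (htwice _ (hmem 0)) (htwice _ (hmem 1)) (htwice _ (hmem 2)) (htwice _ (hmem 3))
    (halt_max 0 (by decide)) (halt_max 1 (by decide)) (halt_max 2 (by decide)) hav

theorem RepresentsLab.exists_not_occursTwice_of_isClique {V : Type*} {G : SimpleGraph V}
    {f : V → L} (hf : Function.Injective f) (hw : RepresentsLab G f w) (hav : Avoids132 w)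
    {s : Finset V} (hs : G.IsClique (s : Set V)) (hcard : 4 ≤ s.card) :
    ∃ v ∈ s, ¬ OccursTwice w (f v) := by
  classical
  obtain ⟨_, hx, hfx⟩ := hav.exists_not_occursTwice (T := s.image f)
    (by rwa [Finset.card_image_of_injective s hf]) (by
      simp only [Finset.mem_image]
      rintro _ ⟨u, hu, rfl⟩ _ ⟨v, hv, rfl⟩ hfuv
      have huv : u ≠ v := fun h => hfuv (congrArg f h)
      exact (hw.2.2 u v huv).2 (hs hu hv huv))
  obtain ⟨v, hv, rfl⟩ := Finset.mem_image.1 hx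
  exact ⟨v, hv, hfx⟩

end Avoidance

/-- the disjoint union of two complete graphs `K_4` is not 132-representable:
for every injective labeling of its vertices by elements of a linearly ordered set, no
132-avoiding word represents it. -/
theorem stmt_15 :
    ∀ (L : Type*) [LinearOrder L] (f : Fin 4 ⊕ Fin 4 → L), Function.Injective f →
      ¬ ∃ w : List L, Avoids132 w ∧ RepresentsLab twoK4 f w := by
  rintro L _ f hf ⟨w, hav, hw⟩
  have hclique (e : Fin 4 ↪ Fin 4 ⊕ Fin 4) (he : ∀ i j, i ≠ j → twoK4.Adj (e i) (e j)) :
      ∃ v ∈ Finset.univ.map e, ¬ OccursTwice w (f v) := by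
    refine hw.exists_not_occursTwice_of_isClique hf hav ?_ (by simp)
    simp only [Finset.coe_map, Finset.coe_univ, Set.image_univ]
    rintro _ ⟨i, rfl⟩ _ ⟨j, rfl⟩ hij
    exact he i j (fun h => hij (congrArg e h))
  obtain ⟨_, hu, hfu⟩ := hclique .inl (by simp [twoK4])
  obtain ⟨_, hv, hfv⟩ := hclique .inr (by simp [twoK4])
  obtain ⟨i, -, rfl⟩ := Finset.mem_map.1 hu
  obtain ⟨j, -, rfl⟩ := Finset.mem_map.1 hv
  have hadj := (hw.2.2 _ _ Sum.inl_ne_inr).1 (alternates_of_not_occursTwice hfu hfv)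
  simp [twoK4] at hadj
end
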